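/- Let V be a finite-dimensional real vector space with positive semidefinite symmetric bilinear form and R ⊆ V an irreducible extended affine root system. Let V⁰ be the radical of the form, R⁰ = {α ∈ R : (α,α) = 0}, R× = R \ R⁰. Then the image R̄ of R under the canonical projection V → V/V⁰ is a finite root system in V/V⁰ (where the induced form on V/V⁰ is positive definite). -/

import Mathlib

/-!
Cauchy–Schwarz makes the isotropic vectors of a positive semidefinite symmetric form exactly its
radical, so the form descends to a positive definite form on `V/V⁰`, and the root axioms descend
with it. For finiteness, the product of the Cartan numbers `2(β,α)/(α,α)` and `2(α,β)/(β,β)` lies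
in `[0, 4]` by Cauchy–Schwarz, so each Cartan number lies in `{-4, …, 4}`. Hence a root is pinned
down by finitely many possible values of its pairings with a basis chosen among the roots, and
these pairings determine a vector because the form is positive definite.
-/

lemma Int.abs_le_four_of_mul {z w : ℤ} (h0 : 0 ≤ z * w) (h4 : z * w ≤ 4)
    (hw : z ≠ 0 → w ≠ 0) : |z| ≤ 4 := by
  rcases eq_or_ne z 0 with rfl | hz
  · simp
  calc |z| ≤ |z| * |w| := le_mul_of_one_le_right (abs_nonneg z) (Int.one_le_abs (hw hz))
    _ = z * w := by rw [← abs_mul, abs_of_nonneg h0]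
    _ ≤ 4 := h4

namespace LinearMap

variable {W : Type*} [AddCommGroup W] [Module ℝ W]

lemma abs_cartan_le_four {B : W →ₗ[ℝ] W →ₗ[ℝ] ℝ} (hs : ∀ x, 0 ≤ B x x) (hB : B.IsSymm)
    {a b : W} (ha : B a a ≠ 0) (hb : B b b ≠ 0) {z w : ℤ} (hz : 2 * B b a / B a a = z)
    (hw : 2 * B a b / B b b = w) : |z| ≤ 4 := by
  have hab : B a b = B b a := by simpa using hB.eq a b
  have hpos : 0 < B a a * B b b := mul_pos ((hs a).lt_of_ne' ha) ((hs b).lt_of_ne' hb)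
  have hprod : (z : ℝ) * w = 4 * B b a ^ 2 / (B a a * B b b) := by
    rw [← hz, ← hw, hab]; field_simp; ring
  have hcs : B b a ^ 2 ≤ B a a * B b b := by
    rw [mul_comm]; exact BilinForm.apply_sq_le_of_symm B hs hB b a
  refine Int.abs_le_four_of_mul (w := w) ?_ ?_ fun hz0 ↦ ?_
  · have : (0 : ℝ) ≤ z * w := by rw [hprod]; positivity
    exact_mod_cast this
  · have : (z : ℝ) * w ≤ 4 := by
      rw [hprod, div_le_iff₀ hpos]; nlinarith
    exact_mod_cast this
  · rintro rfl
    have hba : B b a = 0 := by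
      simpa [hab, hb] using hw
    rw [hba, mul_zero, zero_div] at hz
    exact hz0 (by exact_mod_cast hz.symm)

lemma eq_of_apply_eq_on_spanning {B : W →ₗ[ℝ] W →ₗ[ℝ] ℝ} (hp : ∀ x, x ≠ 0 → 0 < B x x)
    {s : Set W} (hs : Submodule.span ℝ s = ⊤) {q q' : W} (h : ∀ t ∈ s, B q t = B q' t) :
    q = q' := by
  have hqq' : B q = B q' := LinearMap.ext_on hs h
  by_contra hne
  have := hp (q - q') (sub_ne_zero.mpr hne)
  simp [hqq'] at this

theorem finite_of_integral_cartan [FiniteDimensional ℝ W] {B : W →ₗ[ℝ] W →ₗ[ℝ] ℝ}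
    (hB : B.IsSymm) (hp : ∀ x, x ≠ 0 → 0 < B x x) {S : Set W} (hS : Submodule.span ℝ S = ⊤)
    (hint : ∀ a ∈ S, a ≠ 0 → ∀ b ∈ S, ∃ z : ℤ, 2 * B b a / B a a = z) : S.Finite := by
  obtain ⟨s, hsS, hspan, hli⟩ := exists_linearIndependent ℝ S
  rw [hS] at hspan
  have := hli.setFinite.to_subtype
  have hs : ∀ x, 0 ≤ B x x := fun x ↦ by
    rcases eq_or_ne x 0 with rfl | hx
    exacts [by simp, (hp x hx).le]
  let pairings : W → s → ℝ := fun q t ↦ B q t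
  let values : s → Set ℝ := fun t ↦ (fun z : ℤ ↦ B t t / 2 * z) '' Set.Icc (-4) 4
  have hvalues : (Set.univ.pi values).Finite := Set.Finite.pi fun _ ↦ (Set.finite_Icc _ _).image _
  have hinj : Set.InjOn pairings (pairings ⁻¹' Set.univ.pi values) := fun q _ q' _ h ↦
    eq_of_apply_eq_on_spanning hp hspan fun t ht ↦ congrFun h ⟨t, ht⟩
  refine ((hvalues.preimage hinj).insert 0).subset fun q hq ↦ ?_
  rcases eq_or_ne q 0 with rfl | hq0
  · exact Set.mem_insert _ _
  refine Or.inr fun t _ ↦ ?_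
  have ht0 : (t : W) ≠ 0 := hli.ne_zero t
  obtain ⟨z, hz⟩ := hint t (hsS t.2) ht0 q hq
  obtain ⟨w, hw⟩ := hint q hq hq0 t (hsS t.2)
  refine ⟨z, abs_le.mp (abs_cartan_le_four hs hB (hp _ ht0).ne' (hp _ hq0).ne' hz hw), ?_⟩
  simp only [pairings, ← hz]
  field_simp [(hp _ ht0).ne']

lemma mkQ_ker_eq_zero_iff {B : W →ₗ[ℝ] W →ₗ[ℝ] ℝ} (hs : ∀ x, 0 ≤ B x x) (hB : B.IsSymm)
    (x : W) : (LinearMap.ker B).mkQ x = 0 ↔ B x x = 0 := by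
  rw [Submodule.mkQ_apply, Submodule.Quotient.mk_eq_zero,
    BilinForm.apply_apply_same_eq_zero_iff B hs hB]

lemma pos_of_quotient_ker {B : W →ₗ[ℝ] W →ₗ[ℝ] ℝ} (hs : ∀ x, 0 ≤ B x x) (hB : B.IsSymm)
    {B' : (W ⧸ LinearMap.ker B) →ₗ[ℝ] (W ⧸ LinearMap.ker B) →ₗ[ℝ] ℝ}
    (hB' : ∀ x y, B' ((LinearMap.ker B).mkQ x) ((LinearMap.ker B).mkQ y) = B x y)
    (q : W ⧸ LinearMap.ker B) (hq : q ≠ 0) : 0 < B' q q := by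
  obtain ⟨x, rfl⟩ := Submodule.mkQ_surjective _ q
  rw [hB']
  exact (hs x).lt_of_ne' fun h ↦ hq ((mkQ_ker_eq_zero_iff hs hB x).mpr h)

lemma isSymm_of_quotient_ker {B : W →ₗ[ℝ] W →ₗ[ℝ] ℝ} (hB : B.IsSymm)
    {B' : (W ⧸ LinearMap.ker B) →ₗ[ℝ] (W ⧸ LinearMap.ker B) →ₗ[ℝ] ℝ}
    (hB' : ∀ x y, B' ((LinearMap.ker B).mkQ x) ((LinearMap.ker B).mkQ y) = B x y) :
    B'.IsSymm := by
  refine isSymm_def.mpr fun p q ↦ ?_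
  obtain ⟨x, rfl⟩ := Submodule.mkQ_surjective _ p
  obtain ⟨y, rfl⟩ := Submodule.mkQ_surjective _ q
  rw [hB', hB']
  simpa using hB.eq x y

end LinearMap

theorem stmt10_general {V : Type*} [AddCommGroup V] [Module ℝ V] [FiniteDimensional ℝ V]
    (B : V →ₗ[ℝ] V →ₗ[ℝ] ℝ)
    (hsym : ∀ x y : V, B x y = B y x)
    (hpsd : ∀ x : V, 0 ≤ B x x)
    (R : Set V)
    -- (R1) `⟨R⟩` is a full lattice in `V`
    (hR1a : Submodule.span ℝ R = ⊤)
    -- (R2) integrality of Cartan numbers for non-isotropic roots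
    (hR2 : ∀ a ∈ R, B a a ≠ 0 → ∀ b ∈ R, B b b ≠ 0 →
      ∃ z : ℤ, 2 * B b a / B a a = (z : ℝ))
    -- (R3) closure under reflections in non-isotropic roots
    (hR3 : ∀ a ∈ R, B a a ≠ 0 → ∀ b ∈ R, b - (2 * B b a / B a a) • a ∈ R)
    -- the induced form on the quotient by the radical
    (B' : (V ⧸ LinearMap.ker B) →ₗ[ℝ] (V ⧸ LinearMap.ker B) →ₗ[ℝ] ℝ)
    (hB' : ∀ x y : V,
      B' ((LinearMap.ker B).mkQ x) ((LinearMap.ker B).mkQ y) = B x y) :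
    (Set.Finite ((LinearMap.ker B).mkQ '' R)) ∧
    (Submodule.span ℝ ((LinearMap.ker B).mkQ '' R) = ⊤) ∧
    (∀ q : V ⧸ LinearMap.ker B, q ≠ 0 → 0 < B' q q) ∧
    (∀ a ∈ (LinearMap.ker B).mkQ '' R, a ≠ 0 →
      ∀ b ∈ (LinearMap.ker B).mkQ '' R,
        b - (2 * B' b a / B' a a) • a ∈ (LinearMap.ker B).mkQ '' R) ∧
    (∀ a ∈ (LinearMap.ker B).mkQ '' R, a ≠ 0 →
      ∀ b ∈ (LinearMap.ker B).mkQ '' R,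
        ∃ z : ℤ, 2 * B' b a / B' a a = (z : ℝ)) := by
  have hB : B.IsSymm := LinearMap.isSymm_def.mpr hsym
  have hpos := LinearMap.pos_of_quotient_ker hpsd hB hB'
  have hnonzero {a : V} (ha : (LinearMap.ker B).mkQ a ≠ 0) : B a a ≠ 0 :=
    fun h ↦ ha ((LinearMap.mkQ_ker_eq_zero_iff hpsd hB a).mpr h)
  have hspan : Submodule.span ℝ ((LinearMap.ker B).mkQ '' R) = ⊤ := by
    rw [Submodule.span_image, hR1a, Submodule.map_top, Submodule.range_mkQ]
  have hint : ∀ a ∈ (LinearMap.ker B).mkQ '' R, a ≠ 0 → ∀ b ∈ (LinearMap.ker B).mkQ '' R,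
      ∃ z : ℤ, 2 * B' b a / B' a a = (z : ℝ) := by
    rintro _ ⟨a, ha, rfl⟩ ha0 _ ⟨b, hb, rfl⟩
    rw [hB', hB']
    by_cases hbb : B b b = 0
    · rw [LinearMap.BilinForm.apply_apply_same_eq_zero_iff B hpsd hB, LinearMap.mem_ker] at hbb
      exact ⟨0, by simp [hbb]⟩
    · exact hR2 a ha (hnonzero ha0) b hb hbb
  refine ⟨LinearMap.finite_of_integral_cartan (LinearMap.isSymm_of_quotient_ker hB hB') hpos
    hspan hint, hspan, hpos, ?_, hint⟩
  rintro _ ⟨a, ha, rfl⟩ ha0 _ ⟨b, hb, rfl⟩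
  exact ⟨_, hR3 a ha (hnonzero ha0) b hb, by rw [map_sub, map_smul, hB', hB']⟩

/-- The canonical image of an irreducible extended affine root system `R` in
`V/V⁰` (quotient by the radical of the positive semidefinite form) is a finite
root system: the induced form is positive definite, the image of `R` is finite,
spans the quotient, and is closed under reflections with integral Cartan numbers. -/
theorem stmt10 {V : Type*} [AddCommGroup V] [Module ℝ V] [FiniteDimensional ℝ V]
    (B : V →ₗ[ℝ] V →ₗ[ℝ] ℝ)
    (hsym : ∀ x y : V, B x y = B y x)
    (hpsd : ∀ x : V, 0 ≤ B x x)
    (hnontriv : ∃ x : V, B x x ≠ 0)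
    (R : Set V)
    -- (R1) `⟨R⟩` is a full lattice in `V`
    (hR1a : Submodule.span ℝ R = ⊤)
    (hR1b : Nonempty ((Fin (Module.finrank ℝ V) → ℤ) ≃+ AddSubgroup.closure R))
    -- (R2) integrality of Cartan numbers for non-isotropic roots
    (hR2 : ∀ a ∈ R, B a a ≠ 0 → ∀ b ∈ R, B b b ≠ 0 →
      ∃ z : ℤ, 2 * B b a / B a a = (z : ℝ))
    -- (R3) closure under reflections in non-isotropic roots
    (hR3 : ∀ a ∈ R, B a a ≠ 0 → ∀ b ∈ R, b - (2 * B b a / B a a) • a ∈ R)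
    -- (R4) `R⁰ = V⁰ ∩ (R× - R×)`
    (hR4 : {a ∈ R | B a a = 0} =
      {v : V | (∀ w : V, B v w = 0) ∧
        ∃ a ∈ R, ∃ b ∈ R, B a a ≠ 0 ∧ B b b ≠ 0 ∧ v = a - b})
    -- (R5) reduced-ness: `2α ∉ R` for non-isotropic `α ∈ R`
    (hR5 : ∀ a ∈ R, B a a ≠ 0 → (2 : ℝ) • a ∉ R)
    -- irreducibility of `R×`
    (hirr : ∀ S T : Set V, {a ∈ R | B a a ≠ 0} = S ∪ T →
      (∀ s ∈ S, ∀ t ∈ T, B s t = 0) → S = ∅ ∨ T = ∅)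
    -- the induced form on the quotient by the radical
    (B' : (V ⧸ LinearMap.ker B) →ₗ[ℝ] (V ⧸ LinearMap.ker B) →ₗ[ℝ] ℝ)
    (hB' : ∀ x y : V,
      B' ((LinearMap.ker B).mkQ x) ((LinearMap.ker B).mkQ y) = B x y) :
    (Set.Finite ((LinearMap.ker B).mkQ '' R)) ∧
    (Submodule.span ℝ ((LinearMap.ker B).mkQ '' R) = ⊤) ∧
    (∀ q : V ⧸ LinearMap.ker B, q ≠ 0 → 0 < B' q q) ∧
    (∀ a ∈ (LinearMap.ker B).mkQ '' R, a ≠ 0 →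
      ∀ b ∈ (LinearMap.ker B).mkQ '' R,
        b - (2 * B' b a / B' a a) • a ∈ (LinearMap.ker B).mkQ '' R) ∧
    (∀ a ∈ (LinearMap.ker B).mkQ '' R, a ≠ 0 →
      ∀ b ∈ (LinearMap.ker B).mkQ '' R,
        ∃ z : ℤ, 2 * B' b a / B' a a = (z : ℝ)) :=
  stmt10_general B hsym hpsd R hR1a hR2 hR3 B' hB'
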